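/- Let (Ω, F, P) be a probability space and let Δ, Δ̂ : Ω → ℝ be measurable. Assume Δ satisfies the margin condition with exponent α > 0 and constant C > 0, i.e. P(|Δ| ≤ t) ≤ C·t^α for all t ≥ 0, and that Δ̂ − Δ is essentially bounded. Then P(1{Δ̂ > 0} ≠ 1{Δ > 0}) ≤ P(|Δ| ≤ |Δ̂ − Δ|) ≤ C · ‖Δ̂ − Δ‖_{L^∞(P)}^α. -/

import Mathlib

open MeasureTheory
open scoped ENNReal

lemma abs_le_abs_sub_of_not_pos_iff_pos {G : Type*} [AddCommGroup G] [LinearOrder G]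
    [IsOrderedAddMonoid G] {a b : G} (h : ¬(0 < a ↔ 0 < b)) : |b| ≤ |a - b| := by
  by_cases hb : 0 < b
  · have ha : a ≤ 0 := not_lt.mp fun ha => h (iff_of_true ha hb)
    calc |b| = b := abs_of_pos hb
      _ ≤ b - a := (le_sub_self_iff b).mpr ha
      _ ≤ |a - b| := abs_sub_comm a b ▸ le_abs_self _
  · have ha : 0 < a := by_contra fun ha => h (iff_of_false ha hb)
    calc |b| = -b := abs_of_nonpos (not_lt.mp hb)
      _ ≤ a - b := by rw [sub_eq_add_neg]; exact le_add_of_nonneg_left ha.le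
      _ ≤ |a - b| := le_abs_self _

lemma ae_abs_le_toReal_eLpNorm_top {Ω : Type*} [MeasurableSpace Ω] {P : Measure Ω} {f : Ω → ℝ}
    (hf : MemLp f ∞ P) : ∀ᵐ ω ∂P, |f ω| ≤ (eLpNorm f ∞ P).toReal := by
  rw [toReal_eLpNorm hf.aestronglyMeasurable]
  exact ae_le_lpNorm_exponent_top hf

lemma measure_abs_le_abs_le_of_ae_abs_le {Ω : Type*} [MeasurableSpace Ω] {P : Measure Ω}
    [IsFiniteMeasure P] {Δ f : Ω → ℝ} {M : ℝ} (hf : ∀ᵐ ω ∂P, |f ω| ≤ M) :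
    (P {ω | |Δ ω| ≤ |f ω|}).toReal ≤ (P {ω | |Δ ω| ≤ M}).toReal :=
  ENNReal.toReal_mono (measure_ne_top P _) <| measure_mono_ae <| by
    filter_upwards [hf] with ω hω hle using hle.trans hω

theorem stmt_6_general {Ω : Type*} [MeasurableSpace Ω] (P : Measure Ω) [IsProbabilityMeasure P]
    (Δ Δhat : Ω → ℝ)
    (α C : ℝ)
    (hmargin : ∀ t : ℝ, 0 ≤ t → (P {ω | |Δ ω| ≤ t}).toReal ≤ C * t ^ α)
    (hbdd : MemLp (Δhat - Δ) ∞ P) :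
    (P {ω | (if 0 < Δhat ω then (1 : ℝ) else 0) ≠ (if 0 < Δ ω then (1 : ℝ) else 0)}).toReal
        ≤ (P {ω | |Δ ω| ≤ |Δhat ω - Δ ω|}).toReal ∧
    (P {ω | |Δ ω| ≤ |Δhat ω - Δ ω|}).toReal
        ≤ C * (eLpNorm (Δhat - Δ) ∞ P).toReal ^ α := by
  constructor
  · refine ENNReal.toReal_mono (measure_ne_top P _) (measure_mono fun ω hω => ?_)
    exact abs_le_abs_sub_of_not_pos_iff_pos fun hpos => hω (if_congr hpos rfl rfl)
  · calc (P {ω | |Δ ω| ≤ |Δhat ω - Δ ω|}).toReal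
        ≤ (P {ω | |Δ ω| ≤ (eLpNorm (Δhat - Δ) ∞ P).toReal}).toReal :=
          measure_abs_le_abs_le_of_ae_abs_le (ae_abs_le_toReal_eLpNorm_top hbdd)
      _ ≤ C * (eLpNorm (Δhat - Δ) ∞ P).toReal ^ α := hmargin _ ENNReal.toReal_nonneg

/-- Disagreement bound (Theorem 2(ii) key step): under the margin condition with exponent `α`
and constant `C`, `P(1{Δ̂ > 0} ≠ 1{Δ > 0}) ≤ P(|Δ| ≤ |Δ̂ − Δ|) ≤ C · ‖Δ̂ − Δ‖_∞^α`. -/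
theorem stmt_6 {Ω : Type*} [MeasurableSpace Ω] (P : Measure Ω) [IsProbabilityMeasure P]
    (Δ Δhat : Ω → ℝ) (hΔ : Measurable Δ) (hΔhat : Measurable Δhat)
    (α C : ℝ) (hα : 0 < α) (hC : 0 < C)
    (hmargin : ∀ t : ℝ, 0 ≤ t → (P {ω | |Δ ω| ≤ t}).toReal ≤ C * t ^ α)
    (hbdd : MemLp (Δhat - Δ) ∞ P) :
    (P {ω | (if 0 < Δhat ω then (1 : ℝ) else 0) ≠ (if 0 < Δ ω then (1 : ℝ) else 0)}).toReal
        ≤ (P {ω | |Δ ω| ≤ |Δhat ω - Δ ω|}).toReal ∧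
    (P {ω | |Δ ω| ≤ |Δhat ω - Δ ω|}).toReal
        ≤ C * (eLpNorm (Δhat - Δ) ∞ P).toReal ^ α :=
  stmt_6_general P Δ Δhat α C hmargin hbdd
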